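/- arXiv:1910.13248 — 5 statements merged into one kernel-verified Lean document; each statement's English description precedes it below -/
import Mathlib

section
/- For an odd prime q and any integer y, the geometric polynomial satisfies w_q(y) ≡ y (mod q), where w_n(y) = Σ_{k=0}^{n} S(n,k)·k!·y^k and S(n,k) denotes the Stirling numbers of the second kind. -/
open Finset

/-- Stirling numbers of the second kind. -/
def stirling2 : ℕ → ℕ → ℕ
  | 0, 0 => 1
  | 0, _+1 => 0
  | _+1, 0 => 0
  | n+1, k+1 => stirling2 n k + (k+1) * stirling2 n (k+1)

/-- Unsigned Stirling numbers of the first kind. -/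
def stirling1 : ℕ → ℕ → ℕ
  | 0, 0 => 1
  | 0, _+1 => 0
  | _+1, 0 => 0
  | n+1, k+1 => stirling1 n k + n * stirling1 n (k+1)

/-- `rstirling2 r n k` is the r-Stirling number of the second kind S_r(n+r, k+r). -/
def rstirling2 (r : ℕ) : ℕ → ℕ → ℕ
  | 0, 0 => 1
  | 0, _+1 => 0
  | n+1, 0 => r * rstirling2 r n 0
  | n+1, k+1 => rstirling2 r n k + (k+1+r) * rstirling2 r n (k+1)

/-- `rstirling1 r n k` is the unsigned r-Stirling number of the first kind c_r(n+r, k+r). -/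
def rstirling1 (r : ℕ) : ℕ → ℕ → ℕ
  | 0, 0 => 1
  | 0, _+1 => 0
  | n+1, 0 => (n+r) * rstirling1 r n 0
  | n+1, k+1 => rstirling1 r n k + (n+r) * rstirling1 r n (k+1)

/-- Rising factorial (Pochhammer symbol) (r)_k = r(r+1)⋯(r+k-1). -/
def risingFactorial (r k : ℕ) : ℕ := ∏ i ∈ Finset.range k, (r + i)

/-- Higher order geometric polynomial w_n^{(r)}(y) = Σ_{k=0}^n S(n,k) (r)_k y^k.
For r = 1 this is the geometric (Fubini) polynomial w_n(y). -/
def geomPoly (r n : ℕ) {R : Type*} [CommRing R] (y : R) : R :=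
  ∑ k ∈ Finset.range (n+1), ((stirling2 n k * risingFactorial r k : ℕ) : R) * y ^ k

/-- Signed alternating binomial sum `∑ (-1)^(k+j) C(k,j) j^n`, which equals `k! S(n,k)`. -/
def Taux (n k : ℕ) : ℤ := ∑ j ∈ range (k+1), (-1)^(k+j) * (k.choose j) * (j:ℤ)^n

lemma Taux_common (n k : ℕ) :
    Taux (n+1) (k+1) = (k+1) * ∑ i ∈ range (k+1), (-1:ℤ)^(k+i) * (k.choose i) * ((i:ℤ)+1)^n := by
  unfold Taux
  rw [Finset.sum_range_succ', Finset.mul_sum]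
  simp only [Nat.cast_zero, zero_pow (Nat.succ_ne_zero n), mul_zero, add_zero]
  apply Finset.sum_congr rfl
  intro i _
  have h : (((k+1).choose (i+1) : ℤ)) * ((i:ℤ)+1) = ((k:ℤ)+1) * (k.choose i) := by
    exact_mod_cast (Nat.add_one_mul_choose_eq k i).symm
  have hs : (-1:ℤ)^(k+1+(i+1)) = (-1)^(k+i) := by
    rw [show k+1+(i+1) = (k+i)+2 by ring, pow_add]; ring
  rw [hs]
  push_cast
  linear_combination ((-1:ℤ)^(k+i) * ((i:ℤ)+1)^n) * h

lemma Taux_add (n k : ℕ) :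
    Taux n k + Taux n (k+1) = ∑ i ∈ range (k+1), (-1:ℤ)^(k+i) * (k.choose i) * ((i:ℤ)+1)^n := by
  have hTk1 : Taux n (k+1)
      = (∑ i ∈ range (k+1), (-1:ℤ)^(k+i) * ((k.choose i : ℤ) + (k.choose (i+1) : ℤ)) * ((i:ℤ)+1)^n)
        + (-1)^(k+1) * (0:ℤ)^n := by
    unfold Taux
    rw [Finset.sum_range_succ']
    congr 1
    · apply Finset.sum_congr rfl
      intro i _
      have hc : (((k+1).choose (i+1) : ℤ)) = (k.choose i : ℤ) + (k.choose (i+1) : ℤ) := by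
        exact_mod_cast Nat.choose_succ_succ k i
      have hs : (-1:ℤ)^(k+1+(i+1)) = (-1)^(k+i) := by
        rw [show k+1+(i+1) = (k+i)+2 by ring, pow_add]; ring
      rw [hc, hs]; push_cast; ring
    · simp
  have hTk : Taux n k
      = (∑ i ∈ range (k+1), -((-1:ℤ)^(k+i)) * (k.choose (i+1) : ℤ) * ((i:ℤ)+1)^n)
        + (-1)^k * (0:ℤ)^n := by
    unfold Taux
    rw [Finset.sum_range_succ']
    congr 1
    · rw [Finset.sum_range_succ, Nat.choose_succ_self]
      simp only [Nat.cast_zero, mul_zero, zero_mul, add_zero]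
      apply Finset.sum_congr rfl
      intro i _
      have hs : (-1:ℤ)^(k+(i+1)) = -((-1:ℤ)^(k+i)) := by
        rw [show k+(i+1) = (k+i)+1 by ring, pow_succ]; ring
      rw [hs]; push_cast; ring
    · simp
  rw [hTk, hTk1, add_add_add_comm, ← Finset.sum_add_distrib,
    show ((-1:ℤ)^k * (0:ℤ)^n + (-1)^(k+1) * (0:ℤ)^n) = 0 by rw [pow_succ]; ring, add_zero]
  apply Finset.sum_congr rfl
  intro i _
  ring

lemma Taux_succ_succ (n k : ℕ) : Taux (n+1) (k+1) = (k+1) * (Taux n k + Taux n (k+1)) := by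
  rw [Taux_common, Taux_add]

lemma key (n k : ℕ) : ((k.factorial * stirling2 n k : ℕ) : ℤ) = Taux n k := by
  induction n generalizing k with
  | zero =>
    match k with
    | 0 => simp [stirling2, Taux]
    | k+1 =>
      simp only [stirling2, mul_zero, Nat.cast_zero]
      unfold Taux
      have := Int.alternating_sum_range_choose (n := k+1)
      rw [if_neg (Nat.succ_ne_zero k)] at this
      calc (0:ℤ) = (-1)^(k+1) * ∑ i ∈ range (k+1+1), (-1:ℤ)^i * ((k+1).choose i) := by
              rw [this]; ring
        _ = _ := by
              rw [Finset.mul_sum]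
              apply Finset.sum_congr rfl
              intro j _
              rw [pow_add]
              push_cast
              ring
  | succ n ih =>
    match k with
    | 0 => simp [stirling2, Taux, Nat.succ_ne_zero]
    | k+1 =>
      have h1 := ih k
      have h2 := ih (k+1)
      rw [Taux_succ_succ, ← h1, ← h2]
      simp only [stirling2, Nat.factorial_succ]
      push_cast
      ring

lemma rf_one (k : ℕ) : risingFactorial 1 k = k.factorial := by
  induction k with
  | zero => rfl
  | succ k ih =>
    rw [risingFactorial, Finset.prod_range_succ, ← risingFactorial, ih, Nat.factorial_succ]
    ring

lemma st1 (k : ℕ) : k.factorial * stirling2 1 k = if k = 1 then 1 else 0 := by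
  match k with
  | 0 => rfl
  | 1 => rfl
  | k+2 => simp [stirling2]

theorem stmt_0 (q : ℕ) (hq : q.Prime) (hodd : Odd q) (y : ℤ) :
    geomPoly 1 q y ≡ y [ZMOD (q : ℤ)] := by
  haveI : Fact q.Prime := ⟨hq⟩
  rw [← ZMod.intCast_eq_intCast_iff]
  have hcoef : ∀ k, ((stirling2 q k * risingFactorial 1 k : ℕ) : ZMod q)
      = if k = 1 then 1 else 0 := by
    intro k
    rw [rf_one]
    have hq1 : ((k.factorial * stirling2 q k : ℕ) : ZMod q)
        = ((k.factorial * stirling2 1 k : ℕ) : ZMod q) := by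
      have c1 : ((k.factorial * stirling2 q k : ℕ) : ZMod q) = ((Taux q k : ℤ) : ZMod q) := by
        rw [← key]; push_cast; ring
      have c2 : ((k.factorial * stirling2 1 k : ℕ) : ZMod q) = ((Taux 1 k : ℤ) : ZMod q) := by
        rw [← key]; push_cast; ring
      rw [c1, c2]
      unfold Taux
      push_cast
      apply Finset.sum_congr rfl
      intro j _
      rw [ZMod.pow_card, pow_one]
    rw [mul_comm, hq1, st1]
    split <;> simp
  calc ((geomPoly 1 q y : ℤ) : ZMod q)
      = ∑ k ∈ Finset.range (q+1),
          ((stirling2 q k * risingFactorial 1 k : ℕ) : ZMod q) * (y : ZMod q) ^ k := by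
        unfold geomPoly; push_cast; ring
    _ = ∑ k ∈ Finset.range (q+1), if k = 1 then (y : ZMod q) ^ k else 0 := by
        apply Finset.sum_congr rfl
        intro k _
        rw [hcoef]
        split <;> simp
    _ = (y : ZMod q) := by
        simp [hq.ne_zero]
end

section
/- Let q be an odd prime and y an integer such that q divides neither y nor 1+y. If r is a positive integer with r ≡ 1 (mod q), then w_{q-1}^{(r)}(y) ≡ 0 (mod q), where w_n^{(r)}(y) = Σ_{k=0}^{n} S(n,k)·(r)_k·y^k. -/
open Finset

/-- k-th finite difference of x^n at 0. -/
def Dfd (n k : ℕ) : ℤ := ∑ j ∈ range (k+1), (-1)^(k-j) * (k.choose j) * (j:ℤ)^n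

lemma Dfd_zero (k : ℕ) : Dfd 0 k = if k = 0 then 1 else 0 := by
  rw [← Int.alternating_sum_range_choose (n := k)]
  rw [← Finset.sum_range_reflect (fun j => (-1:ℤ)^j * (k.choose j)) (k+1)]
  unfold Dfd
  refine Finset.sum_congr rfl fun j hj => ?_
  simp only [mem_range, Nat.lt_succ_iff] at hj
  have h1 : k + 1 - 1 - j = k - j := by omega
  rw [pow_zero, mul_one, h1, Nat.choose_symm hj]

lemma E_eq (n k : ℕ) :
    ∑ i ∈ range (k+1), (-1:ℤ)^(k-i) * (k.choose i) * ((i:ℤ)+1)^n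
      = Dfd n (k+1) + Dfd n k := by
  have hS : ∑ j ∈ range (k+2), (-1:ℤ)^(k+1-j) * (k.choose j) * (j:ℤ)^n
      = -Dfd n k := by
    rw [Finset.sum_range_succ]
    have h0 : (k.choose (k+1) : ℤ) = 0 := by
      simp [Nat.choose_eq_zero_of_lt]
    rw [h0]
    simp only [mul_zero, zero_mul, add_zero]
    unfold Dfd
    rw [← Finset.sum_neg_distrib]
    refine Finset.sum_congr rfl fun j hj => ?_
    simp only [mem_range, Nat.lt_succ_iff] at hj
    have h1 : k + 1 - j = (k - j) + 1 := by omega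
    rw [h1, pow_succ]
    ring
  have hS' : ∑ j ∈ range (k+2), (-1:ℤ)^(k+1-j) * (k.choose j) * (j:ℤ)^n
      = (∑ i ∈ range (k+1), (-1:ℤ)^(k-i) * (k.choose (i+1)) * ((i:ℤ)+1)^n)
        + (-1)^(k+1) * (0:ℤ)^n := by
    rw [Finset.sum_range_succ' (fun j => (-1:ℤ)^(k+1-j) * (k.choose j) * (j:ℤ)^n) (k+1)]
    simp only [Nat.succ_sub_succ, Nat.choose_zero_right, Nat.cast_one, mul_one, Nat.cast_zero,
      Nat.sub_zero, Nat.cast_add, Nat.cast_one]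
  have hD1 : Dfd n (k+1)
      = (∑ i ∈ range (k+1), (-1:ℤ)^(k-i) * ((k.choose i : ℤ) + (k.choose (i+1))) * ((i:ℤ)+1)^n)
        + (-1)^(k+1) * (0:ℤ)^n := by
    unfold Dfd
    rw [Finset.sum_range_succ' (fun j => (-1:ℤ)^(k+1-j) * ((k+1).choose j) * (j:ℤ)^n) (k+1)]
    simp only [Nat.succ_sub_succ, Nat.choose_zero_right, Nat.cast_one, mul_one, Nat.cast_zero,
      Nat.sub_zero, Nat.cast_add, Nat.cast_one]
    congr 1
  have split : ∑ i ∈ range (k+1), (-1:ℤ)^(k-i) * ((k.choose i : ℤ) + (k.choose (i+1))) * ((i:ℤ)+1)^n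
      = (∑ i ∈ range (k+1), (-1:ℤ)^(k-i) * (k.choose i) * ((i:ℤ)+1)^n)
        + ∑ i ∈ range (k+1), (-1:ℤ)^(k-i) * (k.choose (i+1)) * ((i:ℤ)+1)^n := by
    rw [← Finset.sum_add_distrib]
    exact Finset.sum_congr rfl fun i _ => by ring
  have hF := hS'.symm.trans hS
  rw [hD1, split]
  linarith [hF]

lemma Dfd_eq (n : ℕ) : ∀ k, Dfd n k = (k.factorial * stirling2 n k : ℤ) := by
  induction n with
  | zero =>
    intro k
    rw [Dfd_zero]
    match k with
    | 0 => simp [stirling2]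
    | k+1 => simp [stirling2]
  | succ n ih =>
    intro k
    match k with
    | 0 =>
      simp [Dfd, stirling2]
    | k+1 =>
      have step : Dfd (n+1) (k+1)
          = (k+1) * ∑ i ∈ range (k+1), (-1:ℤ)^(k-i) * (k.choose i) * ((i:ℤ)+1)^n := by
        unfold Dfd
        rw [Finset.sum_range_succ' (fun j => (-1:ℤ)^(k+1-j) * ((k+1).choose j) * (j:ℤ)^(n+1)) (k+1)]
        rw [Finset.mul_sum]
        simp only [Nat.cast_zero, zero_pow (Nat.succ_ne_zero n), mul_zero, add_zero]
        refine Finset.sum_congr rfl fun i hi => ?_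
        have hc : ((k:ℤ)+1) * (k.choose i) = ((k+1).choose (i+1)) * ((i:ℤ)+1) := by
          exact_mod_cast congrArg (Nat.cast : ℕ → ℤ) (Nat.add_one_mul_choose_eq k i)
        have hss : k + 1 - (i+1) = k - i := by omega
        rw [hss]
        push_cast
        rw [pow_succ]
        linear_combination (-(-1:ℤ)^(k-i) * ((i:ℤ)+1)^n) * hc
      rw [step, E_eq, ih (k+1), ih k]
      show _ = ((k+1).factorial * stirling2 (n+1) (k+1) : ℤ)
      rw [show stirling2 (n+1) (k+1) = stirling2 n k + (k+1) * stirling2 n (k+1) from rfl]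
      push_cast [Nat.factorial_succ]
      ring

theorem stmt_6 (q : ℕ) (hq : q.Prime) (hodd : Odd q) (y : ℤ)
    (hy : ¬ (q : ℤ) ∣ y) (hy1 : ¬ (q : ℤ) ∣ (1 + y))
    (r : ℕ) (hr : 1 ≤ r) (hrq : (r : ℤ) ≡ 1 [ZMOD (q : ℤ)]) :
    geomPoly r (q - 1) y ≡ 0 [ZMOD (q : ℤ)] := by
  haveI : Fact q.Prime := ⟨hq⟩
  have hq2 : 2 ≤ q := hq.two_le
  have hq10 : q - 1 ≠ 0 := by omega
  refine (ZMod.intCast_eq_intCast_iff' _ _ _).mp ?_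
  set t : ZMod q := ((y : ℤ) : ZMod q) with ht
  -- r ≡ 1
  have hr1 : ((r : ℕ) : ZMod q) = 1 := by
    have := (ZMod.intCast_eq_intCast_iff' (r:ℤ) 1 q).mpr hrq
    push_cast at this
    exact this
  -- rising factorial becomes factorial
  have hrf : ∀ k : ℕ, ((risingFactorial r k : ℕ) : ZMod q) = (k.factorial : ZMod q) := by
    intro k
    rw [risingFactorial, ← Finset.prod_range_add_one_eq_factorial]
    push_cast [hr1]
    exact Finset.prod_congr rfl fun i _ => by ring
  -- 1 + t ≠ 0
  have ht1 : 1 + t ≠ 0 := by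
    intro h
    apply hy1
    have : ((1 + y : ℤ) : ZMod q) = 0 := by push_cast; exact h
    exact (ZMod.intCast_zmod_eq_zero_iff_dvd _ _).mp this
  -- coefficient evaluation
  have hcoef : ∀ k : ℕ, k < q →
      ((k.factorial * stirling2 (q-1) k : ℤ) : ZMod q)
        = (if k = 0 then (1:ZMod q) else 0) - (-1)^k := by
    intro k hk
    rw [← Dfd_eq]
    have key : ((Dfd (q-1) k : ℤ) : ZMod q) = ((Dfd 0 k : ℤ) : ZMod q) - (-1)^k := by
      unfold Dfd
      push_cast
      rw [Finset.sum_range_succ' (fun j => (-1:ZMod q)^(k-j) * (k.choose j) * (j:ZMod q)^(q-1)) k]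
      rw [Finset.sum_range_succ' (fun j => (-1:ZMod q)^(k-j) * (k.choose j) * (j:ZMod q)^0) k]
      have h0a : ((0:ℕ) : ZMod q)^(q-1) = 0 := by
        rw [Nat.cast_zero, zero_pow hq10]
      have h0b : ((0:ℕ) : ZMod q)^0 = 1 := pow_zero _
      simp only [Nat.cast_zero, zero_pow hq10, pow_zero, mul_zero, add_zero, mul_one,
        Nat.choose_zero_right, Nat.cast_one]
      rw [Nat.sub_zero, add_sub_cancel_right]
      refine Finset.sum_congr rfl fun i hi => ?_
      simp only [mem_range] at hi
      have hne : ((i+1 : ℕ) : ZMod q) ≠ 0 := by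
        rw [Ne, ZMod.natCast_eq_zero_iff]
        intro hdvd
        have := Nat.le_of_dvd (Nat.succ_pos i) hdvd
        omega
      rw [show (((i:ℕ)+1 : ℕ) : ZMod q) = ((i:ZMod q)+1) by push_cast; ring] at hne ⊢
      rw [ZMod.pow_card_sub_one_eq_one hne, mul_one]
    rw [key, Dfd_zero]
    split <;> simp_all
  -- main computation
  rw [geomPoly]
  push_cast
  rw [show q - 1 + 1 = q by omega]
  have hsum : ∑ k ∈ range q, ((stirling2 (q-1) k : ZMod q) * ((risingFactorial r k : ℕ) : ZMod q)) * t^k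
      = ∑ k ∈ range q, ((if k = 0 then (1:ZMod q) else 0) - (-1)^k) * t^k := by
    refine Finset.sum_congr rfl fun k hk => ?_
    simp only [mem_range] at hk
    rw [hrf k]
    have := hcoef k hk
    push_cast at this
    rw [mul_comm ((stirling2 (q-1) k : ZMod q)) _, this]
  have goal2 : ∑ k ∈ range q, ((if k = 0 then (1:ZMod q) else 0) - (-1)^k) * t^k = 0 := by
    simp only [sub_mul, Finset.sum_sub_distrib]
    have e1 : ∑ k ∈ range q, (if k = 0 then (1:ZMod q) else 0) * t^k = 1 := by
      rw [Finset.sum_congr rfl (fun k _ => by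
        rw [ite_mul, one_mul, zero_mul] : ∀ k ∈ range q, (if k = 0 then (1:ZMod q) else 0) * t^k = if k = 0 then t^k else 0)]
      rw [Finset.sum_ite_eq' (range q) 0 (fun k => t^k)]
      simp [hq.pos]
    have e2 : ∑ k ∈ range q, (-1:ZMod q)^k * t^k = 1 := by
      have h1 : ∀ k, (-1:ZMod q)^k * t^k = (-t)^k := fun k => by rw [← mul_pow, neg_one_mul]
      simp only [h1]
      have h2 := geom_sum_mul (-t) q
      rw [ZMod.pow_card] at h2
      have h3 : ((∑ i ∈ range q, (-t)^i) - 1) * (-t - 1) = 0 := by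
        rw [sub_mul, h2, one_mul, sub_self]
      rcases mul_eq_zero.mp h3 with h | h
      · linear_combination h
      · exfalso; apply ht1; linear_combination -h
    rw [e1, e2, sub_self]
  calc ∑ k ∈ range q, ((stirling2 (q-1) k : ZMod q) * ((risingFactorial r k:ℕ) : ZMod q)) * t^k
      = 0 := hsum.trans goal2
end

section
/- Let q be an odd prime and y an integer not divisible by q. If r is a positive integer with r ≡ 0 (mod q), then w_{q+1}^{(r)}(y) ≡ 0 (mod q); if r ≡ -1 (mod q), then w_{q+1}^{(r)}(y) ≡ -y (mod q). Here w_n^{(r)}(y) = Σ_{k=0}^{n} S(n,k)·(r)_k·y^k. -/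
open Finset

lemma key_s7 (n k : ℕ) : ((k.factorial * stirling2 n k : ℕ) : ℤ) =
    ∑ j ∈ range (k+1), (-1)^(k-j) * (k.choose j) * (j:ℤ)^n := by
  induction n generalizing k with
  | zero =>
    have h : ∑ j ∈ range (k+1), ((-1:ℤ))^(k-j) * (k.choose j) * (j:ℤ)^0
        = ∑ j ∈ range (k+1), (-1:ℤ)^j * (k.choose j) := by
      rw [← Finset.sum_range_reflect (fun j => (-1:ℤ)^j * (k.choose j)) (k+1)]
      apply Finset.sum_congr rfl
      intro j hj
      simp only [Finset.mem_range] at hj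
      rw [pow_zero, mul_one, show k+1-1-j = k-j from by omega,
        Nat.choose_symm (by omega : j ≤ k)]
    rw [h, Int.alternating_sum_range_choose]
    cases k with
    | zero => simp [stirling2]
    | succ k => simp [stirling2]
  | succ n ih =>
    cases k with
    | zero => simp [stirling2]
    | succ k =>
      have hrec : stirling2 (n+1) (k+1) = stirling2 n k + (k+1) * stirling2 n (k+1) := rfl
      have hfac : (k+1).factorial = (k+1) * k.factorial := rfl
      -- pointwise coefficient identity
      have hpt : ∀ j ∈ range (k+2),
          (-1:ℤ)^(k+1-j) * ((k+1).choose j) * (j:ℤ)^(n+1)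
          = (k+1) * ((-1)^(k-j) * (k.choose j) * (j:ℤ)^n
              + (-1)^(k+1-j) * ((k+1).choose j) * (j:ℤ)^n) := by
        intro j hj
        simp only [Finset.mem_range] at hj
        have hco : ∀ m : ℤ, (-1:ℤ)^(k+1-j) * ((k+1).choose j) * (j:ℤ)
            = (k+1) * ((-1)^(k-j) * (k.choose j) + (-1)^(k+1-j) * ((k+1).choose j)) →
            True := fun _ _ => trivial
        have hmain : (-1:ℤ)^(k+1-j) * ((k+1).choose j) * (j:ℤ)
            = (k+1) * ((-1)^(k-j) * (k.choose j) + (-1)^(k+1-j) * ((k+1).choose j)) := by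
          rcases j with _ | i
          · simp [show k+1-0 = (k-0)+1 from by omega, pow_succ]
          · -- j = i+1, i ≤ k
            have hi : i ≤ k := by omega
            have h1 : (k+1) * (k.choose i) = ((k+1).choose (i+1)) * (i+1) :=
              Nat.add_one_mul_choose_eq k i
            have h2 : (k+1).choose (i+1) = k.choose i + k.choose (i+1) :=
              Nat.choose_succ_succ k i
            have hsign : (-1:ℤ)^(k-(i+1)) * (k.choose (i+1))
                = -((-1:ℤ)^(k-i) * (k.choose (i+1))) := by
              rcases Nat.eq_or_lt_of_le hi with h | h
              · subst h; simp [Nat.choose_succ_self]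
              · rw [show k - i = (k-(i+1))+1 from by omega, pow_succ]; ring
            have hki : k+1-(i+1) = k-i := by omega
            rw [hki]
            have h1' : ((k+1:ℕ):ℤ) * (k.choose i) = ((k+1).choose (i+1)) * ((i:ℤ)+1) := by
              exact_mod_cast congrArg (Nat.cast : ℕ → ℤ) h1
            have h2' : (((k+1).choose (i+1) : ℕ) : ℤ) = k.choose i + k.choose (i+1) := by
              exact_mod_cast congrArg (Nat.cast : ℕ → ℤ) h2
            push_cast
            push_cast at hsign h1' h2'
            linear_combination (-(-1:ℤ)^(k-i)) * h1' - ((k:ℤ)+1)*((-1:ℤ)^(k-i)) * h2' - ((k:ℤ)+1) * hsign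
        calc (-1:ℤ)^(k+1-j) * ((k+1).choose j) * (j:ℤ)^(n+1)
            = ((-1:ℤ)^(k+1-j) * ((k+1).choose j) * (j:ℤ)) * (j:ℤ)^n := by ring
          _ = ((k+1) * ((-1)^(k-j) * (k.choose j) + (-1)^(k+1-j) * ((k+1).choose j))) * (j:ℤ)^n := by
              rw [hmain]
          _ = _ := by ring
      rw [Finset.sum_congr rfl hpt, ← Finset.mul_sum, Finset.sum_add_distrib]
      have hext : ∑ j ∈ range (k+2), (-1:ℤ)^(k-j) * (k.choose j) * (j:ℤ)^n
          = ∑ j ∈ range (k+1), (-1:ℤ)^(k-j) * (k.choose j) * (j:ℤ)^n := by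
        rw [Finset.sum_range_succ, Nat.choose_succ_self]
        simp
      rw [hext, ← ih k, ← ih (k+1)]
      rw [hrec, hfac]
      push_cast
      ring

lemma stirling2_one_right (n : ℕ) : stirling2 (n+1) 1 = 1 := by
  induction n with
  | zero => rfl
  | succ n ih =>
    show stirling2 (n+1) 0 + 1 * stirling2 (n+1) 1 = 1
    rw [show stirling2 (n+1) 0 = 0 from rfl, ih]

lemma stirling2_one_left (k : ℕ) : stirling2 1 (k+2) = 0 := by
  show stirling2 0 (k+1) + (k+2) * stirling2 0 (k+2) = 0
  simp [stirling2]

lemma stirling2_prime (p k : ℕ) (hp : p.Prime) (h2 : 2 ≤ k) (hk : k < p) :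
    (stirling2 p k : ZMod p) = 0 := by
  haveI : Fact p.Prime := ⟨hp⟩
  have h1 := congrArg (Int.cast : ℤ → ZMod p) (key_s7 p k)
  have h2' := congrArg (Int.cast : ℤ → ZMod p) (key_s7 1 k)
  push_cast at h1 h2'
  simp only [ZMod.pow_card] at h1
  simp only [pow_one] at h2'
  obtain ⟨m, rfl⟩ : ∃ m, k = m + 2 := ⟨k - 2, by omega⟩
  rw [stirling2_one_left] at h2'
  have hfac : ((m+2).factorial : ZMod p) ≠ 0 := by
    rw [Ne, ZMod.natCast_eq_zero_iff]
    intro hdvd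
    exact absurd (hp.dvd_factorial.mp hdvd) (by omega)
  have := h1.trans h2'.symm
  simp only [Nat.cast_zero, mul_zero] at this
  exact (mul_eq_zero.mp this).resolve_left hfac

lemma rising_dvd (p r : ℕ) (hp : 0 < p) : p ∣ risingFactorial r (p+1) := by
  have hmem : (p - r % p) % p ∈ Finset.range (p+1) :=
    Finset.mem_range.mpr (lt_of_lt_of_le (Nat.mod_lt _ hp) (by omega))
  refine dvd_trans ?_ (Finset.dvd_prod_of_mem _ hmem)
  rcases Nat.eq_zero_or_pos (r % p) with h0 | hpos
  · simpa [h0] using Nat.dvd_of_mod_eq_zero h0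
  · have hlt : r % p < p := Nat.mod_lt _ hp
    have hdm := Nat.div_add_mod r p
    refine ⟨r / p + 1, ?_⟩
    rw [Nat.mod_eq_of_lt (by omega)]
    have hmul : p * (r / p + 1) = p * (r / p) + p := by ring
    omega

lemma stirling2_succ_prime (q : ℕ) (hq : q.Prime) (h3 : 3 ≤ q) (k : ℕ)
    (hk3 : 3 ≤ k) (hkq : k ≤ q) : (stirling2 (q+1) k : ZMod q) = 0 := by
  obtain ⟨m, rfl⟩ : ∃ m, k = m + 1 := ⟨k - 1, by omega⟩
  show ((stirling2 q m + (m+1) * stirling2 q (m+1) : ℕ) : ZMod q) = 0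
  push_cast
  rw [stirling2_prime q m hq (by omega) (by omega)]
  by_cases h : m + 1 < q
  · rw [stirling2_prime q (m+1) hq (by omega) h]; ring
  · have hm1 : ((m : ZMod q) + 1) = 0 := by
      have : ((m : ZMod q) + 1) = ((m + 1 : ℕ) : ZMod q) := by push_cast; ring
      rw [this, show m + 1 = q from by omega, ZMod.natCast_self]
    rw [hm1]; ring

theorem stmt_7 (q : ℕ) (hq : q.Prime) (hodd : Odd q) (y : ℤ) (hy : ¬ (q : ℤ) ∣ y)
    (r : ℕ) (hr : 1 ≤ r) :
    ((r : ℤ) ≡ 0 [ZMOD (q : ℤ)] → geomPoly r (q + 1) y ≡ 0 [ZMOD (q : ℤ)]) ∧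
    ((r : ℤ) ≡ -1 [ZMOD (q : ℤ)] → geomPoly r (q + 1) y ≡ -y [ZMOD (q : ℤ)]) := by
  haveI : Fact q.Prime := ⟨hq⟩
  have h3 : 3 ≤ q := by
    have := hq.two_le
    rcases hodd with ⟨m, hm⟩
    omega
  have hq1 : stirling2 q 1 = 1 := by
    obtain ⟨n, hn⟩ : ∃ n, q = n + 1 := ⟨q - 1, by omega⟩
    rw [hn]; exact stirling2_one_right n
  have hs1 : stirling2 (q+1) 1 = 1 := stirling2_one_right q
  have hs2 : ((stirling2 (q+1) 2 : ℕ) : ZMod q) = 1 := by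
    show ((stirling2 q 1 + 2 * stirling2 q 2 : ℕ) : ZMod q) = 1
    push_cast
    rw [hq1, stirling2_prime q 2 hq le_rfl (by omega)]
    push_cast; ring
  have hrf1 : risingFactorial r 1 = r := by simp [risingFactorial]
  have hrf2 : risingFactorial r 2 = r * (r + 1) := by
    simp [risingFactorial, Finset.prod_range_succ]
  have hsub : ({1, 2} : Finset ℕ) ⊆ Finset.range (q+2) := by
    intro x hx
    simp only [Finset.mem_insert, Finset.mem_singleton] at hx
    simp only [Finset.mem_range]
    omega
  have hzero : ∀ k ∈ Finset.range (q+2), k ∉ ({1, 2} : Finset ℕ) →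
      ((stirling2 (q+1) k * risingFactorial r k : ℕ) : ZMod q) * (y : ZMod q)^k = 0 := by
    intro k hk hk'
    simp only [Finset.mem_range] at hk
    simp only [Finset.mem_insert, Finset.mem_singleton, not_or] at hk'
    push_cast
    rcases Nat.eq_zero_or_pos k with h0 | hpos
    · subst h0
      rw [show stirling2 (q+1) 0 = 0 from rfl]
      push_cast; ring
    · by_cases hkq : k = q + 1
      · subst hkq
        have : ((risingFactorial r (q+1) : ℕ) : ZMod q) = 0 :=
          (ZMod.natCast_eq_zero_iff _ _).mpr (rising_dvd q r (by omega))
        rw [this]; ring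
      · rw [stirling2_succ_prime q hq h3 k (by omega) (by omega)]; ring
  have hmain : ((geomPoly r (q+1) y : ℤ) : ZMod q)
      = (r : ZMod q) * (y : ZMod q) + ((r : ZMod q) * ((r : ZMod q) + 1)) * (y : ZMod q)^2 := by
    rw [geomPoly]
    push_cast
    rw [← Finset.sum_subset hsub (by
      intro k hk hk'
      have := hzero k hk hk'
      push_cast at this ⊢
      exact this)]
    rw [Finset.sum_pair (by norm_num : (1:ℕ) ≠ 2)]
    rw [hs1, hrf1, hrf2]
    push_cast [hs2]
    ring
  constructor
  · intro h0
    have hr0 : (r : ZMod q) = 0 := by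
      have := (ZMod.intCast_eq_intCast_iff _ _ q).mpr h0
      push_cast at this
      exact this
    refine (ZMod.intCast_eq_intCast_iff _ _ q).mp ?_
    rw [hmain, hr0]
    push_cast; ring
  · intro h1
    have hr1 : (r : ZMod q) = -1 := by
      have := (ZMod.intCast_eq_intCast_iff _ _ q).mpr h1
      push_cast at this
      exact this
    refine (ZMod.intCast_eq_intCast_iff _ _ q).mp ?_
    rw [hmain, hr1]
    push_cast; ring
end

section
/- For a prime q and nonnegative integer m, the Stirling numbers of the second kind satisfy S(q+m, k) ≡ S(m+1, k) + S(m, k-q) (mod q) for all k ≥ 0, where S(m, k-q) is interpreted as 0 when k < q. -/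
open Finset

open Polynomial

lemma stirling2_zero_right (n : ℕ) : stirling2 (n+1) 0 = 0 := rfl

lemma stirling2_eq_zero_of_lt : ∀ {n k : ℕ}, n < k → stirling2 n k = 0
  | 0, _+1, _ => rfl
  | n+1, k+1, h => by
      rw [stirling2, stirling2_eq_zero_of_lt (show n < k by omega),
        stirling2_eq_zero_of_lt (show n < k+1 by omega)]; simp

lemma sum_stirling2_desc (R : Type*) [CommRing R] (n : ℕ) :
    ∑ k ∈ range (n+1), (stirling2 n k : R[X]) * descPochhammer R k = X ^ n := by
  induction n with
  | zero => simp [stirling2]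
  | succ n ih =>
    rw [Finset.sum_range_succ']
    have h0 : (stirling2 (n+1) 0 : R[X]) * descPochhammer R 0 = 0 := by
      simp [stirling2_zero_right]
    rw [h0, add_zero]
    have key : ∀ k, (stirling2 (n+1) (k+1) : R[X]) * descPochhammer R (k+1)
        = X * ((stirling2 n k : R[X]) * descPochhammer R k)
          + ((((k+1) * stirling2 n (k+1) : ℕ) : R[X]) * descPochhammer R (k+1)
             - ((k * stirling2 n k : ℕ) : R[X]) * descPochhammer R k) := by
      intro k
      rw [show stirling2 (n+1) (k+1) = stirling2 n k + (k+1) * stirling2 n (k+1) from rfl]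
      rw [descPochhammer_succ_right]
      push_cast
      ring
    rw [Finset.sum_congr rfl fun k _ => key k, Finset.sum_add_distrib,
      Finset.sum_range_sub (fun k => ((k * stirling2 n k : ℕ) : R[X]) * descPochhammer R k)]
    rw [stirling2_eq_zero_of_lt (Nat.lt_succ_self n)]
    simp only [Nat.mul_zero, Nat.zero_mul, Nat.cast_zero, zero_mul, sub_zero]
    rw [← Finset.mul_sum, ih]
    ring

lemma desc_sum_inj {R : Type*} [CommRing R] [Nontrivial R] [NoZeroDivisors R] (c d : ℕ → R) :
    ∀ n : ℕ, (∑ k ∈ range (n+1), (c k) • descPochhammer R k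
        = ∑ k ∈ range (n+1), (d k) • descPochhammer R k) → ∀ k ≤ n, c k = d k := by
  intro n
  induction n with
  | zero =>
    intro h k hk
    interval_cases k
    simpa [descPochhammer_zero] using congrArg (fun p => Polynomial.coeff p 0) h
  | succ n ih =>
    intro h k hk
    have hcoeff : ∀ e : ℕ → R,
        (∑ k ∈ range (n+2), (e k) • descPochhammer R k).coeff (n+1) = e (n+1) := by
      intro e
      rw [Polynomial.finset_sum_coeff, Finset.sum_eq_single (n+1)]
      · have h1 : (descPochhammer R (n+1)).coeff (n+1) = 1 := by
          have := (monic_descPochhammer R (n+1)).coeff_natDegree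
          rwa [descPochhammer_natDegree] at this
        rw [Polynomial.coeff_smul, h1, smul_eq_mul, mul_one]
      · intro b hb hne
        have hblt : b < n + 1 := by
          have := Finset.mem_range.mp hb; omega
        rw [Polynomial.coeff_smul,
          Polynomial.coeff_eq_zero_of_natDegree_lt (by rw [descPochhammer_natDegree]; exact hblt),
          smul_zero]
      · intro hmem; exact absurd (Finset.self_mem_range_succ (n+1)) hmem
    have htop : c (n+1) = d (n+1) := by rw [← hcoeff c, ← hcoeff d, h]
    rcases Nat.lt_succ_iff_lt_or_eq.mp (Nat.lt_succ_of_le hk) with h' | h'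
    · refine ih ?_ k (by omega)
      have h2 := h
      rw [Finset.sum_range_succ (fun k => c k • descPochhammer R k),
        Finset.sum_range_succ (fun k => d k • descPochhammer R k), htop] at h2
      exact add_right_cancel h2
    · rw [h']; exact htop

lemma descPochhammer_eq_prod (R : Type*) [CommRing R] (n : ℕ) :
    descPochhammer R n = ∏ i ∈ range n, (X - (i : R[X])) := by
  induction n with
  | zero => simp
  | succ n ih => rw [descPochhammer_succ_right, ih, Finset.prod_range_succ]

lemma descPochhammer_zmod (q : ℕ) (hq : q.Prime) :
    descPochhammer (ZMod q) q = X ^ q - X := by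
  haveI : Fact q.Prime := ⟨hq⟩
  have hcard : Fintype.card (ZMod q) = q := ZMod.card q
  have hroots : (X ^ q - X : (ZMod q)[X]).roots = Finset.univ.val := by
    have := FiniteField.roots_X_pow_card_sub_X (ZMod q)
    rwa [hcard] at this
  have hmonic : (X ^ q - X : (ZMod q)[X]).Monic := by
    obtain ⟨q', rfl⟩ : ∃ q', q = q' + 1 := ⟨q - 1, by have := hq.two_le; omega⟩
    apply Polynomial.monic_X_pow_sub
    rw [Polynomial.degree_X]
    exact_mod_cast show 1 < q' + 1 from hq.one_lt
  have hdeg : (X ^ q - X : (ZMod q)[X]).natDegree = q :=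
    FiniteField.X_pow_card_sub_X_natDegree_eq _ hq.one_lt
  have hprod := Polynomial.prod_multiset_X_sub_C_of_monic_of_roots_card_eq hmonic
    (by rw [hroots, hdeg]; simpa using hcard)
  have hbij : ∏ i ∈ range q, (X - ((i : ℕ) : (ZMod q)[X])) = ∏ a : ZMod q, (X - C a) := by
    refine Finset.prod_bij' (fun (i : ℕ) (_ : i ∈ range q) => ((i : ZMod q)))
      (fun (a : ZMod q) (_ : a ∈ Finset.univ) => a.val)
      (fun a ha => Finset.mem_univ _) (fun a ha => Finset.mem_range.mpr (ZMod.val_lt a))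
      (fun i hi => ZMod.val_cast_of_lt (Finset.mem_range.mp hi))
      (fun a ha => ZMod.natCast_rightInverse a)
      (fun i hi => by rw [Polynomial.C_eq_natCast])
  rw [descPochhammer_eq_prod, hbij, ← hprod, hroots]
  rfl

lemma stirling2_prime_s8 (q : ℕ) (hq : q.Prime) (k : ℕ) :
    (stirling2 q k : ZMod q)
      = (if k = 1 then 1 else 0) + (if k = q then 1 else 0) := by
  haveI : Fact q.Prime := ⟨hq⟩
  rcases le_or_gt k q with hk | hk
  · refine desc_sum_inj (fun k => (stirling2 q k : ZMod q))
      (fun k => (if k = 1 then 1 else 0) + (if k = q then 1 else 0)) q ?_ k hk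
    have lhs : ∑ j ∈ range (q+1), (stirling2 q j : ZMod q) • descPochhammer (ZMod q) j
        = X ^ q := by
      rw [← sum_stirling2_desc (ZMod q) q]
      refine Finset.sum_congr rfl fun j _ => ?_
      rw [Polynomial.smul_eq_C_mul, Polynomial.C_eq_natCast]
    have rhs : ∑ j ∈ range (q+1),
        ((if j = 1 then (1 : ZMod q) else 0) + (if j = q then 1 else 0)) • descPochhammer (ZMod q) j
        = X ^ q := by
      simp only [add_smul, ite_smul, one_smul, zero_smul, Finset.sum_add_distrib,
        Finset.sum_ite_eq' (range (q+1))]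
      rw [if_pos (Finset.mem_range.mpr (by have := hq.two_le; omega)),
        if_pos (Finset.mem_range.mpr (by omega)),
        descPochhammer_one, descPochhammer_zmod q hq]
      ring
    rw [lhs, rhs]
  · rw [stirling2_eq_zero_of_lt hk]
    have h1 : k ≠ 1 := by have := hq.two_le; omega
    have h2 : k ≠ q := by omega
    simp [h1, h2]

lemma stirling2_one_eq (k : ℕ) : stirling2 1 k = if k = 1 then 1 else 0 := by
  match k with
  | 0 => rfl
  | 1 => rfl
  | (j+2) => rw [stirling2_eq_zero_of_lt (by omega)]; rfl

lemma main_zmod (q : ℕ) (hq : q.Prime) :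
    ∀ m k, (stirling2 (q + m) k : ZMod q)
      = (stirling2 (m + 1) k : ZMod q)
        + (if q ≤ k then (stirling2 m (k - q) : ZMod q) else 0) := by
  intro m
  induction m with
  | zero =>
    intro k
    rw [Nat.add_zero, stirling2_prime_s8 q hq k, stirling2_one_eq]
    have h2 := hq.two_le
    rcases eq_or_ne k q with rfl | hkq
    · simp [Nat.sub_self, show stirling2 0 0 = 1 from rfl, show k ≠ 1 by omega]
    · have : q ≤ k → stirling2 0 (k - q) = 0 := by
        intro h
        have : k - q ≠ 0 := by omega
        obtain ⟨j, hj⟩ := Nat.exists_eq_succ_of_ne_zero this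
        rw [hj]; rfl
      rcases le_or_gt q k with h | h
      · simp [this h, hkq]
      · simp [hkq, Nat.not_le.mpr h]
  | succ m ih =>
    intro k
    match k with
    | 0 =>
      have h1 : stirling2 (q + (m+1)) 0 = 0 := by
        rw [show q + (m+1) = (q+m) + 1 by ring, stirling2_zero_right]
      have h2 : stirling2 (m+2) 0 = 0 := stirling2_zero_right _
      simp [h1, h2, Nat.not_le.mpr hq.pos]
    | (j+1) =>
      have hL : stirling2 (q + (m+1)) (j+1)
          = stirling2 (q+m) j + (j+1) * stirling2 (q+m) (j+1) := by
        rw [show q + (m+1) = (q+m) + 1 by ring]; rfl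
      have hR : (stirling2 (m+2) (j+1) : ZMod q)
          = (stirling2 (m+1) j : ZMod q) + (j+1) * stirling2 (m+1) (j+1) := by
        rw [show stirling2 (m+2) (j+1)
          = stirling2 (m+1) j + (j+1) * stirling2 (m+1) (j+1) from rfl]
        push_cast; ring
      rw [hL]
      push_cast [ih j, ih (j+1)]
      rw [hR]
      rcases lt_trichotomy q (j+1) with h | h | h
      · -- q ≤ j
        have hqj : q ≤ j := by omega
        obtain ⟨i, hi⟩ : ∃ i, j = q + i := ⟨j - q, by omega⟩
        subst hi
        have e1 : q + i - q = i := by omega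
        have e2 : q + i + 1 - q = i + 1 := by omega
        rw [if_pos (by omega : q ≤ q + i + 1), e1, e2]
        have hS : (stirling2 (m+1) (i+1) : ZMod q)
            = (stirling2 m i : ZMod q) + (i+1) * stirling2 m (i+1) := by
          rw [show stirling2 (m+1) (i+1)
            = stirling2 m i + (i+1) * stirling2 m (i+1) from rfl]
          push_cast; ring
        rw [hS]
        have hc : ((q : ZMod q) : ZMod q) = 0 := ZMod.natCast_self q
        push_cast
        rw [ZMod.natCast_self]
        simp only [if_pos hqj, if_pos (show q ≤ 1+q+i by omega), if_pos (show q ≤ q+i+1 by omega)]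
        ring
      · -- q = j+1
        subst h
        rw [if_neg (by omega : ¬ (j+1) ≤ j), if_pos (le_refl (j+1)), Nat.sub_self]
        rcases m with _ | m'
        · rw [show stirling2 1 0 = 0 from rfl]
          push_cast
          rw [show ((j:ℕ)+1 : ZMod (j+1)) = 0 by exact_mod_cast ZMod.natCast_self (j+1)]
          simp
        · rw [stirling2_zero_right]
          push_cast
          rw [show ((j:ℕ)+1 : ZMod (j+1)) = 0 by exact_mod_cast ZMod.natCast_self (j+1)]
          have hz : stirling2 (2+m') 0 = 0 := by rw [show 2+m' = (1+m')+1 by omega]; rfl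
          simp [hz, stirling2_zero_right]
      · -- j+1 < q
        rw [if_neg (by omega : ¬ q ≤ j), if_neg (by omega : ¬ q ≤ j+1),
          if_neg (by omega : ¬ q ≤ j+1)]
        ring


theorem stmt_8 (q : ℕ) (hq : q.Prime) (m k : ℕ) :
    (stirling2 (q + m) k : ℤ) ≡
      (stirling2 (m + 1) k : ℤ) + (if q ≤ k then (stirling2 m (k - q) : ℤ) else 0)
      [ZMOD (q : ℤ)] := by
  have h := main_zmod q hq m k
  have := (ZMod.intCast_eq_intCast_iff (stirling2 (q + m) k : ℤ)
    ((stirling2 (m + 1) k : ℤ) + (if q ≤ k then (stirling2 m (k - q) : ℤ) else 0)) q).mp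
  apply this
  push_cast
  exact h
end

section
/- For all n ≥ 0 and positive integers r, the identity Σ_{k=0}^{n} C(n,k) w_k^{(r+1)}(y) · r·y = w_{n+1}^{(r)}(y) holds as an identity of polynomials in y. -/
open Finset

lemma stirling2_eq_zero : ∀ n k, n < k → stirling2 n k = 0
  | 0, _+1, _ => rfl
  | n+1, k+1, h => by
    have h' : n < k := Nat.lt_of_succ_lt_succ h
    simp [stirling2, stirling2_eq_zero n k h',
      stirling2_eq_zero n (k+1) (Nat.lt_succ_of_lt h')]

lemma stirling2_sum (n : ℕ) : ∀ k,
    ∑ j ∈ Finset.range (n+1), n.choose j * stirling2 j k = stirling2 (n+1) (k+1) := by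
  induction n with
  | zero =>
    intro k
    cases k with
    | zero => simp [stirling2]
    | succ m => simp [stirling2, stirling2_eq_zero 0 (m+1) (Nat.succ_pos m)]
  | succ n ih =>
    intro k
    have step : ∑ j ∈ Finset.range (n+2), (n+1).choose j * stirling2 j k
        = ∑ j ∈ Finset.range (n+1), n.choose j * stirling2 j k
          + ∑ j ∈ Finset.range (n+1), n.choose j * stirling2 (j+1) k := by
      rw [Finset.sum_range_succ' (fun j => (n+1).choose j * stirling2 j k)]
      simp only [Nat.choose_succ_succ, Nat.add_mul, Finset.sum_add_distrib]
      rw [Finset.sum_range_succ (fun j => n.choose (j+1) * stirling2 (j+1) k),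
        Finset.sum_range_succ' (fun j => n.choose j * stirling2 j k)]
      simp [Nat.choose_succ_self]
      omega
    rw [step, ih k]
    cases k with
    | zero =>
      have hz : ∀ j, stirling2 (j+1) 0 = 0 := fun j => rfl
      simp only [hz, Nat.mul_zero, Finset.sum_const_zero, Nat.add_zero]
      show stirling2 (n+1) 1 = stirling2 (n+1) 0 + 1 * stirling2 (n+1) 1
      cases n <;> simp [stirling2]
    | succ m =>
      have hrec : ∀ j, stirling2 (j+1) (m+1) = stirling2 j m + (m+1) * stirling2 j (m+1) :=
        fun j => rfl
      have h2 : ∑ x ∈ Finset.range (n+1), n.choose x * ((m+1) * stirling2 x (m+1))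
          = (m+1) * stirling2 (n+1) (m+2) := by
        calc ∑ x ∈ Finset.range (n+1), n.choose x * ((m+1) * stirling2 x (m+1))
            = (m+1) * ∑ x ∈ Finset.range (n+1), n.choose x * stirling2 x (m+1) := by
              rw [Finset.mul_sum]; exact Finset.sum_congr rfl fun x _ => by ring
          _ = (m+1) * stirling2 (n+1) (m+2) := by rw [ih (m+1)]
      have h3 : ∑ j ∈ Finset.range (n+1), n.choose j * stirling2 (j+1) (m+1)
          = stirling2 (n+1) (m+1) + (m+1) * stirling2 (n+1) (m+2) := by
        simp only [hrec, Nat.mul_add, Finset.sum_add_distrib, ih m, h2]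
      rw [h3]
      show _ = stirling2 (n+1) (m+1) + (m+2) * stirling2 (n+1) (m+2)
      ring

lemma risingFactorial_succ' (r k : ℕ) :
    risingFactorial r (k+1) = r * risingFactorial (r+1) k := by
  unfold risingFactorial
  rw [Finset.prod_range_succ' (fun i => r + i)]
  simp [Nat.add_comm, Nat.add_assoc, Nat.add_left_comm, Nat.mul_comm]

theorem stmt_11 (n r : ℕ) (hr : 1 ≤ r) (y : ℤ) :
    (∑ k ∈ Finset.range (n+1), (n.choose k : ℤ) * geomPoly (r+1) k y) * ((r : ℤ) * y) =
      geomPoly r (n+1) y := by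
  have hext : ∀ k ∈ Finset.range (n+1), (n.choose k : ℤ) * geomPoly (r+1) k y
      = ∑ j ∈ Finset.range (n+1),
          (n.choose k : ℤ) * (((stirling2 k j * risingFactorial (r+1) j : ℕ) : ℤ) * y ^ j) := by
    intro k hk
    rw [Finset.mem_range] at hk
    unfold geomPoly
    rw [Finset.mul_sum]
    apply Finset.sum_subset
    · intro x hx
      rw [Finset.mem_range] at *
      omega
    · intro x _ hx
      rw [Finset.mem_range, not_lt] at hx
      have : stirling2 k x = 0 := stirling2_eq_zero k x (by omega)
      simp [this]
  rw [Finset.sum_congr rfl hext, Finset.sum_comm]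
  unfold geomPoly
  rw [Finset.sum_range_succ' (fun j => ((stirling2 (n+1) j * risingFactorial r j : ℕ) : ℤ) * y ^ j)]
  have h0 : ((stirling2 (n+1) 0 * risingFactorial r 0 : ℕ) : ℤ) * y ^ 0 = 0 := by
    have : stirling2 (n+1) 0 = 0 := rfl
    simp [this]
  rw [h0, add_zero, Finset.sum_mul]
  apply Finset.sum_congr rfl
  intro j _
  have hrf := risingFactorial_succ' r j
  have hcast : (∑ k ∈ Finset.range (n+1), (n.choose k : ℤ) * (stirling2 k j : ℤ))
      = (stirling2 (n+1) (j+1) : ℤ) := by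
    rw [← stirling2_sum n j]
    push_cast
    rfl
  calc (∑ k ∈ Finset.range (n+1),
        (n.choose k : ℤ) * (((stirling2 k j * risingFactorial (r+1) j : ℕ) : ℤ) * y ^ j))
          * ((r:ℤ) * y)
      = (∑ k ∈ Finset.range (n+1), (n.choose k : ℤ) * (stirling2 k j : ℤ))
          * ((risingFactorial (r+1) j : ℤ) * (r:ℤ)) * y ^ (j+1) := by
        rw [Finset.sum_mul, Finset.sum_mul, Finset.sum_mul]
        apply Finset.sum_congr rfl
        intro k _
        push_cast
        ring
    _ = ((stirling2 (n+1) (j+1) * risingFactorial r (j+1) : ℕ) : ℤ) * y ^ (j+1) := by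
        rw [hcast, hrf]
        push_cast
        ring
end
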